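/- arXiv:2511.07435 — 2 statements merged into one kernel-verified Lean document; each statement's English description precedes it below -/
import Mathlib

section
/- For every x ≥ 0 and every integer r ≥ 0, the r-th central moment admits the expansion M_n^{(α,β)}[t ↦ (t − x)^r](x) = Σ_{j=0}^r binomial(r, j) · (−x)^{r−j} · μ_j^{(α,β)}(x), where μ_j^{(α,β)}(x) = ((α+1)_j / (n−β)^j) · e^{−nx} · Σ_{m=0}^∞ ((α+j+1)_m / ((α+1)_m · m!)) · (nx)^m, with (a)_m = a(a+1)⋯(a+m−1) the Pochhammer symbol. -/
/-!
Expanding `(t - x)^r` binomially reduces everything to the weighted Gamma integrals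
`∫ t^(k+α+j) e^{-(n-β)t} dt = Γ(k+α+j+1) / (n-β)^(k+α+j+1)`, so the `k`-th coefficient of
`t ↦ t^j` is `(k+α+1)_j / (n-β)^j`. The Pochhammer identity
`(k+α+1)_j (α+1)_k = (α+1)_j (α+j+1)_k` turns the resulting series over `k` into Kummer's series
`₁F₁(α+j+1; α+1; nx)`, which converges for every `x` by the ratio test; this justifies exchanging
the finite binomial sum with the series.
-/

open MeasureTheory Real Filter

/-- The Szász–Mirakyan basis functions `ψ_{n,k}(x) = e^{-nx} (nx)^k / k!`. -/
noncomputable def psi (n k : ℕ) (x : ℝ) : ℝ :=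
  Real.exp (-(n * x)) * (n * x) ^ k / (Nat.factorial k)

/-- The Szász–Mirakyan–Laguerre–Durrmeyer operator `M_n^{(α,β)}`. -/
noncomputable def M (α β : ℝ) (n : ℕ) (f : ℝ → ℝ) (x : ℝ) : ℝ :=
  ∑' k : ℕ, (((n : ℝ) - β) ^ ((k : ℝ) + α + 1) / Real.Gamma ((k : ℝ) + α + 1)) *
    (∫ t in Set.Ioi (0 : ℝ), f t * t ^ ((k : ℝ) + α) * Real.exp (-((n : ℝ) - β) * t)) *
    psi n k x

/-- The `r`-th moment `μ_r^{(α,β)}(x) = M_n^{(α,β)}[t ↦ t^r](x)`. -/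
noncomputable def mu (α β : ℝ) (n : ℕ) (r : ℕ) (x : ℝ) : ℝ :=
  M α β n (fun t => t ^ r) x

open Set Polynomial
open scoped Nat

lemma ascPochhammer_eval_mul_eval_add (R : Type*) [CommSemiring R] (a : R) (n m : ℕ) :
    (ascPochhammer R n).eval a * (ascPochhammer R m).eval (a + n) =
      (ascPochhammer R (n + m)).eval a := by
  simpa only [eval_mul, eval_comp, eval_add, eval_X, eval_natCast] using
    congrArg (eval a) (ascPochhammer_mul R n m)

lemma ascPochhammer_eval_add_mul_eval_comm (R : Type*) [CommSemiring R] (a : R) (j k : ℕ) :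
    (ascPochhammer R j).eval (a + k) * (ascPochhammer R k).eval a =
      (ascPochhammer R j).eval a * (ascPochhammer R k).eval (a + j) := by
  rw [mul_comm, ascPochhammer_eval_mul_eval_add, add_comm k, ← ascPochhammer_eval_mul_eval_add]

lemma Real.Gamma_add_nat_eq_mul_ascPochhammer {s : ℝ} (hs : 0 < s) (j : ℕ) :
    Gamma (s + j) = Gamma s * (ascPochhammer ℝ j).eval s := by
  induction j with
  | zero => simp
  | succ j ih =>
    rw [Nat.cast_succ, ← add_assoc, Gamma_add_one (by positivity), ascPochhammer_succ_eval, ih]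
    ring

lemma pow_mul_rpow_eq_rpow_add {t : ℝ} (ht : 0 < t) (j : ℕ) (s : ℝ) :
    t ^ j * t ^ s = t ^ (s + j) := by
  rw [rpow_add ht, rpow_natCast, mul_comm]

section GammaWeight

variable {s c : ℝ}

lemma integrableOn_pow_mul_rpow_mul_exp_neg_mul (hs : -1 < s) (hc : 0 < c) (j : ℕ) :
    IntegrableOn (fun t : ℝ => t ^ j * t ^ s * exp (-c * t)) (Ioi 0) := by
  have hsj : -1 < s + j := by linarith [j.cast_nonneg (α := ℝ)]
  refine (integrableOn_rpow_mul_exp_neg_mul_rpow hsj one_pos hc).congr_fun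
    (fun t ht => ?_) measurableSet_Ioi
  simp only [rpow_one, pow_mul_rpow_eq_rpow_add (mem_Ioi.mp ht)]

lemma rpow_div_Gamma_mul_integral_pow_mul_rpow_mul_exp_neg_mul (hs : -1 < s) (hc : 0 < c)
    (j : ℕ) :
    c ^ (s + 1) / Gamma (s + 1) * ∫ t in Ioi 0, t ^ j * t ^ s * exp (-c * t) =
      (ascPochhammer ℝ j).eval (s + 1) / c ^ j := by
  have hs1 : 0 < s + 1 := by linarith
  have hΓ : Gamma (s + 1) ≠ 0 := (Gamma_pos_of_pos hs1).ne'
  have hcs : c ^ (s + 1) ≠ 0 := (rpow_pos_of_pos hc _).ne'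
  have hint : ∫ t in Ioi 0, t ^ j * t ^ s * exp (-c * t) =
      Gamma (s + 1) * (ascPochhammer ℝ j).eval (s + 1) / (c ^ (s + 1) * c ^ j) := calc
    _ = ∫ t in Ioi 0, t ^ (s + 1 + j - 1) * exp (-(c * t)) := by
      refine setIntegral_congr_fun measurableSet_Ioi fun t ht => ?_
      rw [pow_mul_rpow_eq_rpow_add (mem_Ioi.mp ht), neg_mul, add_right_comm, add_sub_cancel_right]
    _ = (1 / c) ^ (s + 1 + j) * Gamma (s + 1 + j) :=
      integral_rpow_mul_exp_neg_mul_Ioi (by positivity) hc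
    _ = _ := by
      rw [Gamma_add_nat_eq_mul_ascPochhammer hs1, div_rpow one_pos.le hc.le, one_rpow,
        rpow_add hc, rpow_natCast]
      ring
  rw [hint]
  field_simp

lemma rpow_div_Gamma_mul_integral_sub_pow_mul_rpow_mul_exp_neg_mul (hs : -1 < s) (hc : 0 < c)
    (r : ℕ) (x : ℝ) :
    c ^ (s + 1) / Gamma (s + 1) * ∫ t in Ioi 0, (t - x) ^ r * t ^ s * exp (-c * t) =
      ∑ j ∈ Finset.range (r + 1),
        (r.choose j : ℝ) * (-x) ^ (r - j) * ((ascPochhammer ℝ j).eval (s + 1) / c ^ j) := by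
  have hexpand : ∀ t, (t - x) ^ r * t ^ s * exp (-c * t) =
      ∑ j ∈ Finset.range (r + 1),
        (r.choose j : ℝ) * (-x) ^ (r - j) * (t ^ j * t ^ s * exp (-c * t)) := by
    intro t
    rw [sub_eq_add_neg, add_pow, Finset.sum_mul, Finset.sum_mul]
    exact Finset.sum_congr rfl fun j _ => by ring
  simp_rw [hexpand]
  rw [integral_finsetSum _ fun j _ =>
      (integrableOn_pow_mul_rpow_mul_exp_neg_mul hs hc j).const_mul _, Finset.mul_sum]
  refine Finset.sum_congr rfl fun j _ => ?_
  rw [integral_const_mul, ← rpow_div_Gamma_mul_integral_pow_mul_rpow_mul_exp_neg_mul hs hc j]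
  ring

end GammaWeight

lemma summable_ascPochhammer_div_mul_factorial_mul_pow {a : ℝ} (ha : 0 < a) (b z : ℝ) :
    Summable fun m : ℕ =>
      (ascPochhammer ℝ m).eval b / ((ascPochhammer ℝ m).eval a * m !) * z ^ m := by
  set K := (|b| / a + 1) * |z|
  refine summable_of_ratio_norm_eventually_le (r := 1 / 2) (by norm_num) ?_
  filter_upwards [eventually_ge_atTop ⌈2 * K⌉₊] with m hm
  have hmK : 2 * K ≤ m := Nat.ceil_le.mp hm
  have ham : 0 < a + m := by positivity
  have hPa : 0 < (ascPochhammer ℝ m).eval a := ascPochhammer_pos m a ha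
  have hstep : (ascPochhammer ℝ (m + 1)).eval b / ((ascPochhammer ℝ (m + 1)).eval a * (m + 1)!) *
      z ^ (m + 1) = (ascPochhammer ℝ m).eval b / ((ascPochhammer ℝ m).eval a * m !) * z ^ m *
      ((b + m) / ((a + m) * (m + 1)) * z) := by
    rw [ascPochhammer_succ_eval, ascPochhammer_succ_eval, Nat.factorial_succ, pow_succ]
    push_cast
    field_simp
  have hbm : |b + m| ≤ |b| / a * (a + m) + (a + m) := by
    have : |b| ≤ |b| / a * (a + m) := by
      rw [div_mul_eq_mul_div, le_div_iff₀ ha]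
      nlinarith [abs_nonneg b, m.cast_nonneg (α := ℝ)]
    linarith [abs_add_le b m, abs_of_nonneg (m.cast_nonneg (α := ℝ))]
  have hratio : |(b + m) / ((a + m) * (m + 1)) * z| ≤ 1 / 2 := by
    rw [abs_mul, abs_div, abs_of_pos (by positivity : (0 : ℝ) < (a + m) * (m + 1)),
      div_mul_eq_mul_div, div_le_iff₀ (by positivity)]
    nlinarith [abs_nonneg z, mul_le_mul_of_nonneg_right hbm (abs_nonneg z)]
  rw [hstep, norm_mul, mul_comm (1 / 2)]
  exact mul_le_mul_of_nonneg_left hratio (norm_nonneg _)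

lemma ascPochhammer_eval_nat_add_mul_psi {a : ℝ} (ha : 0 < a) (j k n : ℕ) (x : ℝ) :
    (ascPochhammer ℝ j).eval (k + a) * psi n k x =
      (ascPochhammer ℝ j).eval a * exp (-(n * x)) *
        ((ascPochhammer ℝ k).eval (a + j) / ((ascPochhammer ℝ k).eval a * k !) * (n * x) ^ k) := by
  have hPk : (ascPochhammer ℝ k).eval a ≠ 0 := (ascPochhammer_pos k a ha).ne'
  have hid := ascPochhammer_eval_add_mul_eval_comm ℝ a j k
  rw [← eq_div_iff hPk] at hid
  rw [add_comm (k : ℝ), hid, psi]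
  field_simp

theorem stmt_10_general (α β : ℝ) (hα : -1 < α) (n : ℕ) (hn : β < n) (r : ℕ) (x : ℝ) :
    M α β n (fun t => (t - x) ^ r) x =
      ∑ j ∈ Finset.range (r + 1),
        (r.choose j : ℝ) * (-x) ^ (r - j) *
          ((ascPochhammer ℝ j).eval (α + 1) / ((n : ℝ) - β) ^ j * Real.exp (-((n : ℝ) * x)) *
            ∑' m : ℕ,
              (ascPochhammer ℝ m).eval (α + (j : ℝ) + 1) /
                ((ascPochhammer ℝ m).eval (α + 1) * (Nat.factorial m : ℝ)) *
                ((n : ℝ) * x) ^ m) := by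
  have hc : 0 < (n : ℝ) - β := sub_pos.mpr hn
  have ha : 0 < α + 1 := by linarith
  have hterm : ∀ k : ℕ,
      ((n : ℝ) - β) ^ ((k : ℝ) + α + 1) / Gamma ((k : ℝ) + α + 1) *
        (∫ t in Ioi 0, (t - x) ^ r * t ^ ((k : ℝ) + α) * exp (-((n : ℝ) - β) * t)) * psi n k x =
      ∑ j ∈ Finset.range (r + 1), (r.choose j : ℝ) * (-x) ^ (r - j) *
        ((ascPochhammer ℝ j).eval (α + 1) / ((n : ℝ) - β) ^ j * exp (-((n : ℝ) * x)) *
          ((ascPochhammer ℝ k).eval (α + j + 1) / ((ascPochhammer ℝ k).eval (α + 1) * k !) *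
            ((n : ℝ) * x) ^ k)) := by
    intro k
    rw [rpow_div_Gamma_mul_integral_sub_pow_mul_rpow_mul_exp_neg_mul
      (by linarith [k.cast_nonneg (α := ℝ)]) hc, Finset.sum_mul]
    refine Finset.sum_congr rfl fun j _ => ?_
    have h := ascPochhammer_eval_nat_add_mul_psi ha j k n x
    rw [← add_assoc, add_right_comm α 1] at h
    rw [mul_assoc, div_mul_eq_mul_div, h]
    ring
  rw [M, tsum_congr hterm, Summable.tsum_finsetSum fun j _ =>
    ((summable_ascPochhammer_div_mul_factorial_mul_pow ha _ _).mul_left _).mul_left _]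
  refine Finset.sum_congr rfl fun j _ => ?_
  rw [tsum_mul_left, tsum_mul_left]

/-- Expansion of the `r`-th central moment in terms of raw moments, each expressed via
the confluent hypergeometric series `₁F₁(α+j+1; α+1; nx)`. -/
theorem stmt_10 (α β : ℝ) (hα : -1 < α) (n : ℕ) (hn : β < n) (r : ℕ) (x : ℝ) (hx : 0 ≤ x) :
    M α β n (fun t => (t - x) ^ r) x =
      ∑ j ∈ Finset.range (r + 1),
        (r.choose j : ℝ) * (-x) ^ (r - j) *
          ((ascPochhammer ℝ j).eval (α + 1) / ((n : ℝ) - β) ^ j * Real.exp (-((n : ℝ) * x)) *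
            ∑' m : ℕ,
              (ascPochhammer ℝ m).eval (α + (j : ℝ) + 1) /
                ((ascPochhammer ℝ m).eval (α + 1) * (Nat.factorial m : ℝ)) *
                ((n : ℝ) * x) ^ m) :=
  stmt_10_general α β hα n hn r x
end

section
/- Let a > 0, α > −1, β ≥ 0. Then there exist a constant C > 0 and an index N such that for every bounded uniformly continuous function f : [0,∞) → ℝ and every natural number n ≥ N (with n > β), sup_{x ∈ [0,a]} | M_n^{(α,β)}[f](x) − f(x) | ≤ C · ω(f, n^{−1/2}), where ω(f, δ) = sup { |f(t) − f(s)| : s, t ∈ [0,∞), |t − s| ≤ δ } is the modulus of continuity of f. -/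
open MeasureTheory Real Filter

/-- The modulus of continuity of `f` on `[0,∞)`. -/
noncomputable def omega (f : ℝ → ℝ) (δ : ℝ) : ℝ :=
  sSup {y : ℝ | ∃ s t : ℝ, 0 ≤ s ∧ 0 ≤ t ∧ |t - s| ≤ δ ∧ y = |f t - f s|}

/-!
The coefficient of `ψ_{n,k}(x)` in `M_n^{(α,β)} f (x)` is the mean of `f` under the
`Gamma(k + α + 1, n - β)` law, and `ψ_{n,k}(x)` are the `Poisson(n x)` weights, so
`M_n^{(α,β)}` averages `f` against a probability measure. Combined with
`|f t - f x| ≤ (1 + (t - x)² / δ²) ω(f, δ)` this gives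
`|M f (x) - f x| ≤ ω(f, δ) (1 + M[(t - x)²](x) / δ²)`, and the second central moment is
`(β² x² + 2 (n + (α + 1) β) x + (α + 1)(α + 2)) / (n - β)² = O(1 / n)` uniformly on
`[0, a]`. Taking `δ = n^{-1/2}` yields the estimate.
-/

open Set ProbabilityTheory

section ModulusOfContinuity

variable {f : ℝ → ℝ} {B δ s t : ℝ}

lemma bddAbove_omega (hB : ∀ t, 0 ≤ t → |f t| ≤ B) (δ : ℝ) :
    BddAbove {y : ℝ | ∃ s t : ℝ, 0 ≤ s ∧ 0 ≤ t ∧ |t - s| ≤ δ ∧ y = |f t - f s|} := by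
  refine ⟨2 * B, ?_⟩
  rintro y ⟨s, t, hs, ht, -, rfl⟩
  linarith [abs_sub (f t) (f s), hB t ht, hB s hs]

lemma abs_sub_le_omega (hB : ∀ t, 0 ≤ t → |f t| ≤ B) (hs : 0 ≤ s) (ht : 0 ≤ t)
    (hst : |t - s| ≤ δ) : |f t - f s| ≤ omega f δ :=
  le_csSup (bddAbove_omega hB δ) ⟨s, t, hs, ht, hst, rfl⟩

lemma omega_nonneg (hB : ∀ t, 0 ≤ t → |f t| ≤ B) (hδ : 0 ≤ δ) : 0 ≤ omega f δ :=
  (abs_nonneg _).trans (abs_sub_le_omega hB le_rfl le_rfl (by simpa using hδ))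

lemma abs_sub_le_natCast_mul_omega (hB : ∀ t, 0 ≤ t → |f t| ≤ B) (m : ℕ) :
    ∀ {s t : ℝ}, 0 ≤ s → 0 ≤ t → |t - s| ≤ m * δ → |f t - f s| ≤ m * omega f δ := by
  induction m with
  | zero =>
    intro s t _ _ hst
    obtain rfl : t = s := by simpa [sub_eq_zero] using hst
    simp
  | succ m ih =>
    intro s t hs ht hst
    -- `u` splits `[s, t]` in the ratio `m : 1`
    set u := (s + m * t) / (m + 1)
    have hm : (0 : ℝ) < m + 1 := by positivity
    have hu : 0 ≤ u := by positivity
    have htu : |t - u| = |t - s| / (m + 1) := by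
      rw [show t - u = (t - s) / (m + 1) by simp only [u]; field_simp; ring, abs_div, abs_of_pos hm]
    have hus : |u - s| = m * (|t - s| / (m + 1)) := by
      rw [show u - s = m * ((t - s) / (m + 1)) by simp only [u]; field_simp; ring, abs_mul, abs_div,
        abs_of_pos hm, Nat.abs_cast]
    have hδ : |t - s| / (m + 1) ≤ δ := by
      rw [div_le_iff₀ hm]; push_cast at hst; linarith
    calc |f t - f s| ≤ |f t - f u| + |f u - f s| := abs_sub_le _ _ _
      _ ≤ omega f δ + m * omega f δ := by
        gcongr
        · exact abs_sub_le_omega hB hu ht (htu ▸ hδ)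
        · exact ih hs hu (hus ▸ by gcongr)
      _ = (m + 1 : ℕ) * omega f δ := by push_cast; ring

lemma abs_sub_le_omega_mul (hB : ∀ t, 0 ≤ t → |f t| ≤ B) (hδ : 0 < δ) (hs : 0 ≤ s)
    (ht : 0 ≤ t) : |f t - f s| ≤ (1 + (t - s) ^ 2 / δ ^ 2) * omega f δ := by
  set r := |t - s| / δ
  have hr : 0 ≤ r := by positivity
  have hceil : (⌈r⌉₊ : ℝ) ≤ 1 + (t - s) ^ 2 / δ ^ 2 := by
    rw [← sq_abs, ← div_pow]
    rcases le_or_gt r 1 with h | h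
    · have : ⌈r⌉₊ ≤ 1 := Nat.ceil_le.mpr (by simpa using h)
      have : (⌈r⌉₊ : ℝ) ≤ 1 := by exact_mod_cast this
      nlinarith
    · nlinarith [Nat.ceil_lt_add_one hr]
  calc |f t - f s| ≤ ⌈r⌉₊ * omega f δ :=
        abs_sub_le_natCast_mul_omega hB _ hs ht ((div_le_iff₀ hδ).mp (Nat.le_ceil r))
    _ ≤ _ := by gcongr; exact omega_nonneg hB hδ.le

end ModulusOfContinuity

section WeightedAverage

variable {y A B : ℝ}

lemma abs_integral_mul_sub_le {X : Type*} [MeasurableSpace X] {μ : Measure X} {w f g : X → ℝ}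
    (hw : ∀ᵐ t ∂μ, 0 ≤ w t) (hw_int : Integrable w μ) (hw_one : ∫ t, w t ∂μ = 1)
    (hf : Integrable (fun t => f t * w t) μ) (hg : Integrable (fun t => g t * w t) μ)
    (hfg : ∀ᵐ t ∂μ, |f t - y| ≤ A + B * g t) :
    |∫ t, f t * w t ∂μ - y| ≤ A + B * ∫ t, g t * w t ∂μ := by
  have hdiff : Integrable (fun t => (f t - y) * w t) μ := by
    simpa only [sub_mul, Pi.sub_def] using hf.sub (hw_int.const_mul y)
  have hbound : Integrable (fun t => (A + B * g t) * w t) μ := by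
    simpa only [add_mul, mul_assoc, Pi.add_def] using (hw_int.const_mul A).add (hg.const_mul B)
  calc |∫ t, f t * w t ∂μ - y| = |∫ t, (f t - y) * w t ∂μ| := by
        simp only [sub_mul, integral_sub hf (hw_int.const_mul y), integral_const_mul, hw_one,
          mul_one]
    _ ≤ ∫ t, |(f t - y) * w t| ∂μ := abs_integral_le_integral_abs
    _ ≤ ∫ t, (A + B * g t) * w t ∂μ := by
        refine integral_mono_ae hdiff.abs hbound ?_
        filter_upwards [hw, hfg] with t hwt hft
        rw [abs_mul, abs_of_nonneg hwt]
        exact mul_le_mul_of_nonneg_right hft hwt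
    _ = A + B * ∫ t, g t * w t ∂μ := by
        simp only [add_mul, mul_assoc, integral_add (hw_int.const_mul A) (hg.const_mul B),
          integral_const_mul, hw_one, mul_one]

lemma abs_tsum_mul_sub_le {ι : Type*} {w a g : ι → ℝ} (hw : ∀ k, 0 ≤ w k) (hw_one : HasSum w 1)
    (hg : Summable (fun k => g k * w k)) (hag : ∀ k, |a k - y| ≤ A + B * g k) :
    |∑' k, a k * w k - y| ≤ A + B * ∑' k, g k * w k := by
  have hbound : HasSum (fun k => (A + B * g k) * w k) (A + B * ∑' k, g k * w k) := by
    simpa only [add_mul, mul_assoc, mul_one] using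
      (hw_one.mul_left A).add (hg.hasSum.mul_left B)
  have hle : ∀ k, |(a k - y) * w k| ≤ (A + B * g k) * w k := fun k => by
    rw [abs_mul, abs_of_nonneg (hw k)]
    exact mul_le_mul_of_nonneg_right (hag k) (hw k)
  have hdiff : Summable (fun k => (a k - y) * w k) :=
    (hbound.summable.of_nonneg_of_le (fun _ => abs_nonneg _) hle).of_abs
  have ha : Summable (fun k => a k * w k) := by
    simpa only [sub_mul, sub_add_cancel] using hdiff.add (hw_one.summable.mul_left y)
  calc |∑' k, a k * w k - y| = |∑' k, (a k - y) * w k| := by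
        simp only [sub_mul, ha.tsum_sub (hw_one.summable.mul_left y), tsum_mul_left,
          hw_one.tsum_eq, mul_one]
    _ ≤ ∑' k, |(a k - y) * w k| := by
        simpa only [Real.norm_eq_abs] using norm_tsum_le_tsum_norm hdiff.norm
    _ ≤ ∑' k, (A + B * g k) * w k := hdiff.abs.tsum_le_tsum hle hbound.summable
    _ = A + B * ∑' k, g k * w k := hbound.tsum_eq

end WeightedAverage

section GammaMoments

variable {s c : ℝ}

lemma pow_mul_gammaPDFReal_of_pos (j : ℕ) {t : ℝ} (ht : 0 < t) :
    t ^ j * gammaPDFReal s c t = c ^ s / Gamma s * (t ^ (s + j - 1) * exp (-(c * t))) := by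
  rw [gammaPDFReal, if_pos ht.le, show s + j - 1 = j + (s - 1) by ring, rpow_add ht,
    rpow_natCast]
  ring

lemma integrableOn_pow_mul_gammaPDFReal (hs : 0 < s) (hc : 0 < c) (j : ℕ) :
    IntegrableOn (fun t => t ^ j * gammaPDFReal s c t) (Ioi 0) := by
  have h := (integrableOn_rpow_mul_exp_neg_mul_rpow (s := s + j - 1) (p := 1)
    (by linarith [(Nat.cast_nonneg j : (0 : ℝ) ≤ j)]) one_pos hc).const_mul (c ^ s / Gamma s)
  refine IntegrableOn.congr_fun h (fun t ht => ?_) measurableSet_Ioi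
  rw [pow_mul_gammaPDFReal_of_pos j ht, rpow_one, neg_mul]

lemma integral_pow_mul_gammaPDFReal (hs : 0 < s) (hc : 0 < c) (j : ℕ) :
    ∫ t in Ioi 0, t ^ j * gammaPDFReal s c t = Gamma (s + j) / (Gamma s * c ^ j) := by
  have hsj : 0 < s + j := by positivity
  rw [setIntegral_congr_fun measurableSet_Ioi (fun t ht => pow_mul_gammaPDFReal_of_pos j ht),
    integral_const_mul, integral_rpow_mul_exp_neg_mul_Ioi hsj hc, one_div, inv_rpow hc.le,
    rpow_add hc, rpow_natCast]
  have : 0 < c ^ s := rpow_pos_of_pos hc s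
  have : 0 < Gamma s := Gamma_pos_of_pos hs
  field_simp

lemma integral_gammaPDFReal (hs : 0 < s) (hc : 0 < c) :
    ∫ t in Ioi 0, gammaPDFReal s c t = 1 := by
  have h := integral_pow_mul_gammaPDFReal hs hc 0
  simp only [pow_zero, one_mul, Nat.cast_zero, add_zero, mul_one] at h
  rw [h, div_self (Gamma_pos_of_pos hs).ne']

lemma integral_sq_sub_mul_gammaPDFReal (hs : 0 < s) (hc : 0 < c) (x : ℝ) :
    ∫ t in Ioi 0, (t - x) ^ 2 * gammaPDFReal s c t
      = s * (s + 1) / c ^ 2 - 2 * x * s / c + x ^ 2 := by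
  have hm := integral_pow_mul_gammaPDFReal hs hc
  have hi := integrableOn_pow_mul_gammaPDFReal hs hc
  have hexpand : (fun t => (t - x) ^ 2 * gammaPDFReal s c t) = fun t =>
      t ^ 2 * gammaPDFReal s c t - 2 * x * (t ^ 1 * gammaPDFReal s c t)
        + x ^ 2 * (t ^ 0 * gammaPDFReal s c t) := by
    ext t; ring
  have hi21 : IntegrableOn (fun t =>
      t ^ 2 * gammaPDFReal s c t - 2 * x * (t ^ 1 * gammaPDFReal s c t)) (Ioi 0) :=
    (hi 2).sub ((hi 1).const_mul _)
  rw [hexpand, integral_add hi21 ((hi 0).const_mul _),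
    integral_sub (hi 2) ((hi 1).const_mul _), integral_const_mul, integral_const_mul, hm, hm, hm]
  simp only [Nat.cast_ofNat, Nat.cast_one, Nat.cast_zero, add_zero, pow_zero, pow_one, mul_one]
  rw [show s + 2 = s + 1 + 1 by ring, Gamma_add_one (by positivity), Gamma_add_one hs.ne']
  have : 0 < Gamma s := Gamma_pos_of_pos hs
  field_simp

end GammaMoments

section GammaAverage

variable {f : ℝ → ℝ} {B s c δ x : ℝ}

lemma abs_setIntegral_mul_gammaPDFReal_sub_le (hB : ∀ t, 0 ≤ t → |f t| ≤ B)
    (hfm : AEStronglyMeasurable f (volume.restrict (Ioi 0))) (hs : 0 < s) (hc : 0 < c)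
    (hδ : 0 < δ) (hx : 0 ≤ x) :
    |(∫ t in Ioi 0, f t * gammaPDFReal s c t) - f x|
      ≤ omega f δ + omega f δ / δ ^ 2 * (s * (s + 1) / c ^ 2 - 2 * x * s / c + x ^ 2) := by
  have hw := integrableOn_pow_mul_gammaPDFReal hs hc
  have hw0 : IntegrableOn (gammaPDFReal s c) (Ioi 0) := by simpa using hw 0
  have hf : IntegrableOn (fun t => f t * gammaPDFReal s c t) (Ioi 0) := by
    refine hw0.bdd_mul (c := B) hfm ?_
    filter_upwards [ae_restrict_mem measurableSet_Ioi] with t ht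
    exact hB t (le_of_lt ht)
  have hg : IntegrableOn (fun t => (t - x) ^ 2 * gammaPDFReal s c t) (Ioi 0) := by
    have h := ((hw 2).sub ((hw 1).const_mul (2 * x))).add ((hw 0).const_mul (x ^ 2))
    refine IntegrableOn.congr_fun h (fun t _ => ?_) measurableSet_Ioi
    simp only [Pi.add_apply, Pi.sub_apply]
    ring
  rw [← integral_sq_sub_mul_gammaPDFReal hs hc x]
  refine abs_integral_mul_sub_le (y := f x) (A := omega f δ) (B := omega f δ / δ ^ 2)
    (ae_of_all _ (gammaPDFReal_nonneg hs hc)) hw0 (integral_gammaPDFReal hs hc) hf hg ?_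
  filter_upwards [ae_restrict_mem measurableSet_Ioi] with t ht
  have h := abs_sub_le_omega_mul hB hδ hx (le_of_lt ht)
  rw [add_mul, one_mul] at h
  linarith [show (t - x) ^ 2 / δ ^ 2 * omega f δ = omega f δ / δ ^ 2 * (t - x) ^ 2 by ring]

end GammaAverage

section PoissonMoments

variable {n : ℕ} {x : ℝ}

lemma psi_nonneg (hx : 0 ≤ x) (k : ℕ) : 0 ≤ psi n k x := by
  unfold psi; positivity

lemma hasSum_psi (n : ℕ) (x : ℝ) : HasSum (fun k => psi n k x) 1 := by
  have h := (NormedSpace.expSeries_div_hasSum_exp ((n : ℝ) * x)).mul_left (exp (-(n * x)))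
  rw [← exp_eq_exp_ℝ, ← exp_add, neg_add_cancel, exp_zero] at h
  simpa only [psi, mul_div_assoc] using h

lemma hasSum_descFactorial_mul_psi (n : ℕ) (x : ℝ) (j : ℕ) :
    HasSum (fun k => (k.descFactorial j : ℝ) * psi n k x) ((n * x) ^ j) := by
  have hlow : ∑ k ∈ Finset.range j, (k.descFactorial j : ℝ) * psi n k x = 0 :=
    Finset.sum_eq_zero fun k hk => by
      rw [Nat.descFactorial_eq_zero_iff_lt.mpr (Finset.mem_range.mp hk), Nat.cast_zero, zero_mul]
  rw [← hasSum_nat_add_iff' j, hlow, sub_zero]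
  have hshift : ∀ k, ((k + j).descFactorial j : ℝ) * psi n (k + j) x = (n * x) ^ j * psi n k x := by
    intro k
    have hfac := Nat.factorial_mul_descFactorial (Nat.le_add_left j k)
    rw [Nat.add_sub_cancel] at hfac
    have hfac' : ((k + j).factorial : ℝ) = k.factorial * (k + j).descFactorial j := by
      exact_mod_cast hfac.symm
    simp only [psi, hfac', pow_add]
    field_simp
  simpa only [hshift, mul_one] using (hasSum_psi n x).mul_left ((n * x) ^ j)

lemma hasSum_secondMoment_mul_psi (α β : ℝ) (hc : (n : ℝ) - β ≠ 0) :
    HasSum (fun k : ℕ => ((k + α + 1) * (k + α + 1 + 1) / (n - β) ^ 2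
        - 2 * x * (k + α + 1) / (n - β) + x ^ 2) * psi n k x)
      ((β ^ 2 * x ^ 2 + 2 * (n + (α + 1) * β) * x + (α + 1) * (α + 2)) / (n - β) ^ 2) := by
  have h2 := hasSum_descFactorial_mul_psi n x 2
  have h1 := hasSum_descFactorial_mul_psi n x 1
  have h0 := hasSum_psi n x
  simp only [Nat.cast_descFactorial_two, Nat.descFactorial_one] at h2 h1
  -- `(k + α + 1)(k + α + 2) = k (k - 1) + (2α + 4) k + (α + 1)(α + 2)`
  have hsum := ((h2.mul_left (1 / (n - β) ^ 2)).add
    (h1.mul_left ((2 * α + 4) / (n - β) ^ 2 - 2 * x / (n - β)))).add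
    (h0.mul_left ((α + 1) * (α + 2) / (n - β) ^ 2 - 2 * x * (α + 1) / (n - β) + x ^ 2))
  rw [show (β ^ 2 * x ^ 2 + 2 * (n + (α + 1) * β) * x + (α + 1) * (α + 2)) / (n - β) ^ 2 =
      1 / (n - β) ^ 2 * (n * x) ^ 2 + ((2 * α + 4) / (n - β) ^ 2 - 2 * x / (n - β)) * (n * x) ^ 1
        + ((α + 1) * (α + 2) / (n - β) ^ 2 - 2 * x * (α + 1) / (n - β) + x ^ 2) * 1 by
    field_simp; ring]
  refine hsum.congr_fun fun k => ?_
  field_simp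
  ring

end PoissonMoments

section Estimate

variable {α β : ℝ} {n : ℕ} {f : ℝ → ℝ} {B δ x : ℝ}

lemma M_eq_tsum_integral_gammaPDFReal (α β : ℝ) (n : ℕ) (f : ℝ → ℝ) (x : ℝ) :
    M α β n f x
      = ∑' k : ℕ, (∫ t in Ioi 0, f t * gammaPDFReal (k + α + 1) (n - β) t) * psi n k x := by
  refine tsum_congr fun k => ?_
  rw [← integral_const_mul]
  congr 1
  refine setIntegral_congr_fun measurableSet_Ioi fun t ht => ?_
  rw [gammaPDFReal, if_pos (le_of_lt ht), show (k : ℝ) + α + 1 - 1 = k + α by ring, neg_mul]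
  ring

lemma abs_M_sub_le (hα : -1 < α) (hβn : β < n) (hB : ∀ t, 0 ≤ t → |f t| ≤ B)
    (hfm : AEStronglyMeasurable f (volume.restrict (Ioi 0))) (hx : 0 ≤ x) (hδ : 0 < δ) :
    |M α β n f x - f x| ≤ omega f δ * (1 +
      (β ^ 2 * x ^ 2 + 2 * (n + (α + 1) * β) * x + (α + 1) * (α + 2)) / (n - β) ^ 2 / δ ^ 2) := by
  have hc : (0 : ℝ) < n - β := sub_pos.mpr hβn
  have hmoment := hasSum_secondMoment_mul_psi (x := x) α β hc.ne'
  have h := abs_tsum_mul_sub_le (psi_nonneg hx) (hasSum_psi n x) hmoment.summable fun k =>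
    abs_setIntegral_mul_gammaPDFReal_sub_le hB hfm (by linarith [k.cast_nonneg' (α := ℝ)]) hc hδ hx
  rw [hmoment.tsum_eq] at h
  rw [M_eq_tsum_integral_gammaPDFReal]
  exact h.trans_eq (by ring)

end Estimate

-- Bounds the `n`-free part of the numerator of the second central moment for `x ∈ [0, a]`.
noncomputable def momentConst (α β a : ℝ) : ℝ :=
  β ^ 2 * a ^ 2 + 2 * (α + 1) * |β| * a + (α + 1) * (α + 2)

lemma momentConst_nonneg {α a : ℝ} (hα : -1 < α) (β : ℝ) (ha : 0 ≤ a) :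
    0 ≤ momentConst α β a := by
  have hα1 : 0 < α + 1 := by linarith
  have : 0 < (α + 1) * (α + 2) := mul_pos hα1 (by linarith)
  have : 0 ≤ 2 * (α + 1) * |β| * a := by positivity
  unfold momentConst
  positivity

lemma secondMoment_mul_le {α β n x a : ℝ} (hα : -1 < α) (hn : 1 ≤ n) (hβ : 2 * β ≤ n)
    (hx : 0 ≤ x) (hxa : x ≤ a) :
    (β ^ 2 * x ^ 2 + 2 * (n + (α + 1) * β) * x + (α + 1) * (α + 2)) / (n - β) ^ 2 * n
      ≤ 4 * momentConst α β a + 8 * a := by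
  set K := momentConst α β a
  have hK : 0 ≤ K := momentConst_nonneg hα β (hx.trans hxa)
  have hnum : β ^ 2 * x ^ 2 + 2 * (n + (α + 1) * β) * x + (α + 1) * (α + 2) ≤ K + 2 * n * a := by
    have h1 : β ^ 2 * x ^ 2 ≤ β ^ 2 * a ^ 2 := by gcongr
    have h2 : (α + 1) * β * x ≤ (α + 1) * |β| * a := by
      have : 0 ≤ α + 1 := by linarith
      gcongr
      exact le_abs_self β
    simp only [K, momentConst]
    nlinarith
  have hc : 0 < n - β := by linarith
  rw [div_mul_eq_mul_div, div_le_iff₀ (by positivity)]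
  calc (β ^ 2 * x ^ 2 + 2 * (n + (α + 1) * β) * x + (α + 1) * (α + 2)) * n
      ≤ (K + 2 * n * a) * n := by gcongr
    _ ≤ (K + 2 * a) * n ^ 2 := by
      nlinarith [mul_nonneg (mul_nonneg hK (by linarith : 0 ≤ n)) (by linarith : 0 ≤ n - 1)]
    _ ≤ (K + 2 * a) * (4 * (n - β) ^ 2) := by
      refine mul_le_mul_of_nonneg_left ?_ (by linarith)
      nlinarith [mul_nonneg (by linarith : 0 ≤ 2 * (n - β) - n) (by linarith : 0 ≤ 2 * (n - β) + n)]
    _ = (4 * K + 8 * a) * (n - β) ^ 2 := by ring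

theorem stmt_12_general (α β : ℝ) (hα : -1 < α) (a : ℝ) (ha : 0 < a) :
    ∃ C > (0 : ℝ), ∃ N : ℕ, ∀ f : ℝ → ℝ,
      (∃ B : ℝ, ∀ t : ℝ, 0 ≤ t → |f t| ≤ B) →
      UniformContinuousOn f (Set.Ici 0) →
      ∀ n : ℕ, N ≤ n → β < n → ∀ x ∈ Set.Icc (0 : ℝ) a,
        |M α β n f x - f x| ≤ C * omega f ((n : ℝ) ^ (-(1 : ℝ) / 2)) := by
  have hK := momentConst_nonneg hα β ha.le
  refine ⟨1 + 4 * momentConst α β a + 8 * a, by positivity, max 1 ⌈2 * β⌉₊, ?_⟩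
  rintro f ⟨B, hB⟩ hf n hn hβn x ⟨hx, hxa⟩
  have hn1 : (1 : ℝ) ≤ n := by exact_mod_cast (le_max_left _ _).trans hn
  have hβ : 2 * β ≤ n := (Nat.le_ceil _).trans (by exact_mod_cast (le_max_right _ _).trans hn)
  have hfm : AEStronglyMeasurable f (volume.restrict (Ioi 0)) :=
    (hf.continuousOn.mono Ioi_subset_Ici_self).aestronglyMeasurable measurableSet_Ioi
  set δ := (n : ℝ) ^ (-(1 : ℝ) / 2)
  have hδ : 0 < δ := by positivity
  have hδsq : δ ^ 2 = (n : ℝ)⁻¹ := by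
    rw [← rpow_natCast, ← rpow_mul (by positivity), Nat.cast_ofNat,
      show -(1 : ℝ) / 2 * 2 = -1 by norm_num, rpow_neg_one]
  calc |M α β n f x - f x| ≤ _ := abs_M_sub_le hα hβn hB hfm hx hδ
    _ ≤ _ := by
      rw [hδsq, div_inv_eq_mul, mul_comm]
      refine mul_le_mul_of_nonneg_right ?_ (omega_nonneg hB hδ.le)
      linarith [secondMoment_mul_le hα hn1 hβ hx hxa]

/-- Quantitative estimate on compact intervals:
`sup_{x∈[0,a]} |M_n^{(α,β)}f(x) − f(x)| ≤ C ω(f, n^{−1/2})`. -/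
theorem stmt_12 (α β : ℝ) (hα : -1 < α) (hβ : 0 ≤ β) (a : ℝ) (ha : 0 < a) :
    ∃ C > (0 : ℝ), ∃ N : ℕ, ∀ f : ℝ → ℝ,
      (∃ B : ℝ, ∀ t : ℝ, 0 ≤ t → |f t| ≤ B) →
      UniformContinuousOn f (Set.Ici 0) →
      ∀ n : ℕ, N ≤ n → β < n → ∀ x ∈ Set.Icc (0 : ℝ) a,
        |M α β n f x - f x| ≤ C * omega f ((n : ℝ) ^ (-(1 : ℝ) / 2)) :=
  stmt_12_general α β hα a ha
end
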